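/- arXiv:math-ph/0405006 — 4 statements merged into one kernel-verified Lean document; each statement's English description precedes it below -/
import Mathlib

section
/- Let A be a D×D Hermitian matrix, p(t)=det(t−A) its characteristic polynomial, and write p(t)=t^k q(t) with q(0)≠0. Let K=max(1,‖A‖) and let 0<C≤|q(0)|. Denote by 𝒩(A,E) the number of eigenvalues of A (with multiplicity) that are ≤ E. Then for all ε∈(0,1), 𝒩(A,ε)−𝒩(A,0) ≤ (log(1/C)+D·log K)/log(1/ε). -/
/-!
Each of the `m = 𝒩(A,ε) - 𝒩(A,0)` eigenvalues in `(0, ε]` contributes a factor at most `ε` to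
`|q(0)| = ∏_{λᵢ ≠ 0} |λᵢ|`, and every other factor is at most `K ≥ 1`, so `C ≤ ε ^ m * K ^ D`.
Taking logarithms gives the bound, since `log (1 / ε) > 0`.
-/

open Finset

namespace Matrix.IsHermitian

variable {𝕜 n : Type*} [RCLike 𝕜] [Fintype n] [DecidableEq n] {A : Matrix n n 𝕜}

lemma toEuclideanCLM_eigenvectorBasis (hA : A.IsHermitian) (i : n) :
    toEuclideanCLM (𝕜 := 𝕜) A (hA.eigenvectorBasis i) =
      hA.eigenvalues i • hA.eigenvectorBasis i :=
  WithLp.ofLp_injective 2 <| by simpa using hA.mulVec_eigenvectorBasis i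

lemma abs_eigenvalues_le_norm_toEuclideanCLM (hA : A.IsHermitian) (i : n) :
    |hA.eigenvalues i| ≤ ‖toEuclideanCLM (𝕜 := 𝕜) A‖ := by
  have := (toEuclideanCLM (𝕜 := 𝕜) A).le_opNorm (hA.eigenvectorBasis i)
  rwa [toEuclideanCLM_eigenvectorBasis, norm_smul, hA.eigenvectorBasis.orthonormal.1 i,
    mul_one, mul_one, Real.norm_eq_abs] at this

end Matrix.IsHermitian

lemma Set.ncard_le_eq_ncard_le_add_ncard_Ioc {ι : Type*} [Finite ι] (μ : ι → ℝ) {a b : ℝ}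
    (hab : a ≤ b) :
    {i | μ i ≤ b}.ncard = {i | μ i ≤ a}.ncard + {i | μ i ∈ Set.Ioc a b}.ncard := by
  rw [← Set.ncard_union_eq]
  · congr 1
    ext i
    simp only [Set.mem_ofPred_eq, Set.mem_union, Set.mem_Ioc]
    constructor
    · intro h
      by_cases h' : μ i ≤ a
      exacts [Or.inl h', Or.inr ⟨not_le.1 h', h⟩]
    · rintro (h | h)
      exacts [h.trans hab, h.2]
  · exact Set.disjoint_left.2 fun i hi hi' => not_lt.2 hi hi'.1

lemma Finset.prod_le_pow_card_mul_pow_card {ι : Type*} [Fintype ι] [DecidableEq ι] {f : ι → ℝ}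
    {s : Finset ι} {ε K : ℝ} (hf0 : ∀ i, 0 ≤ f i) (hfK : ∀ i, f i ≤ K) (hK : 1 ≤ K)
    (hfε : ∀ i ∈ s, f i ≤ ε) :
    ∏ i, f i ≤ ε ^ #s * K ^ Fintype.card ι := by
  have hs : ∏ i ∈ s, f i ≤ ε ^ #s := by
    rw [← prod_const]; exact prod_le_prod (fun i _ => hf0 i) hfε
  have hsc : ∏ i ∈ sᶜ, f i ≤ K ^ Fintype.card ι := calc
    _ ≤ K ^ #sᶜ := by rw [← prod_const]; exact prod_le_prod (fun i _ => hf0 i) fun i _ => hfK i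
    _ ≤ K ^ Fintype.card ι := pow_le_pow_right₀ hK (card_le_univ _)
  have hs0 : 0 ≤ ∏ i ∈ s, f i := prod_nonneg fun i _ => hf0 i
  rw [← prod_mul_prod_compl s f]
  exact mul_le_mul hs hsc (prod_nonneg fun i _ => hf0 i) (hs0.trans hs)

lemma Real.le_div_log_of_le_pow_mul_pow {m D : ℕ} {C ε K : ℝ} (hC : 0 < C)
    (hε : ε ∈ Set.Ioo 0 1) (hK : 0 < K) (h : C ≤ ε ^ m * K ^ D) :
    (m : ℝ) ≤ (Real.log (1 / C) + D * Real.log K) / Real.log (1 / ε) := by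
  have hlog := Real.log_le_log hC h
  rw [Real.log_mul (pow_pos hε.1 m).ne' (pow_pos hK D).ne', Real.log_pow, Real.log_pow] at hlog
  have hε' : Real.log ε < 0 := Real.log_neg hε.1 hε.2
  rw [one_div, one_div, Real.log_inv, Real.log_inv, le_div_iff₀ (neg_pos.2 hε')]
  linarith

theorem ncard_Ioc_le_div_log {ι : Type*} [Fintype ι] [DecidableEq ι] (μ : ι → ℝ) {K C ε : ℝ}
    (hK : 1 ≤ K) (hμK : ∀ i, |μ i| ≤ K) (hC0 : 0 < C)
    (hC : C ≤ |∏ i, if μ i = 0 then 1 else μ i|) (hε : ε ∈ Set.Ioo 0 1) :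
    ({i | μ i ∈ Set.Ioc 0 ε}.ncard : ℝ) ≤
      (Real.log (1 / C) + Fintype.card ι * Real.log K) / Real.log (1 / ε) := by
  rw [Set.ncard_eq_toFinset_card']
  refine Real.le_div_log_of_le_pow_mul_pow hC0 hε (one_pos.trans_le hK) (hC.trans ?_)
  rw [abs_prod]
  refine prod_le_pow_card_mul_pow_card (fun i => abs_nonneg _) (fun i => ?_) hK fun i hi => ?_
  · split_ifs
    exacts [abs_one.trans_le hK, hμK i]
  · obtain ⟨hpos, hle⟩ : μ i ∈ Set.Ioc 0 ε := by simpa using hi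
    rwa [if_neg hpos.ne', abs_of_pos hpos]

/-- Lück's lemma: for a Hermitian `D × D` matrix `A` with `K = max(1,‖A‖)` (operator norm)
and `0 < C ≤ |q(0)|`, where `q(0)` is the product of the nonzero eigenvalues of `A`
(the lowest nonvanishing coefficient of the characteristic polynomial, up to sign),
the eigenvalue counting function `𝒩(A,E) = #{i : λ_i ≤ E}` satisfies
`𝒩(A,ε) - 𝒩(A,0) ≤ (log(1/C) + D log K) / log(1/ε)` for all `ε ∈ (0,1)`. -/
theorem stmt_0 (D : ℕ) (A : Matrix (Fin D) (Fin D) ℂ) (hA : A.IsHermitian)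
    (K C : ℝ) (hK : K = max 1 ‖Matrix.toEuclideanCLM (𝕜 := ℂ) A‖)
    (hC0 : 0 < C)
    (hC : C ≤ |∏ i : Fin D, if hA.eigenvalues i = 0 then 1 else hA.eigenvalues i|)
    (ε : ℝ) (hε : ε ∈ Set.Ioo (0 : ℝ) 1) :
    ((Set.ncard {i : Fin D | hA.eigenvalues i ≤ ε} : ℝ)
        - (Set.ncard {i : Fin D | hA.eigenvalues i ≤ 0} : ℝ))
      ≤ (Real.log (1 / C) + D * Real.log K) / Real.log (1 / ε) := by
  have hμK (i : Fin D) : |hA.eigenvalues i| ≤ K :=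
    (hA.abs_eigenvalues_le_norm_toEuclideanCLM i).trans (hK ▸ le_max_right _ _)
  rw [Set.ncard_le_eq_ncard_le_add_ncard_Ioc _ hε.1.le, Nat.cast_add, add_sub_cancel_left]
  simpa using ncard_Ioc_le_div_log hA.eigenvalues (hK ▸ le_max_left _ _) hμK hC0 hC hε
end

section
/- Let ρ be a finite measure on ℝ, J∈ℕ, and Φ:ℝ^J→ℝ continuous, monotone increasing in each variable, and satisfying Φ(q+t·e)−Φ(q) ≥ t for all q∈ℝ^J and t≥0, where e=(1,…,1). Define s(ρ,ε):=sup{ρ([a,a+ε]) : a∈ℝ}. Then for any bounded interval I, the product measure satisfies (⊗^J ρ){q : Φ(q)∈I} ≤ J·s(ρ,|I|)·ρ(ℝ)^{J−1}. -/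
/-!
Shift the coordinates of `q` by `δ > |I|` one at a time. If `Φ q ∈ I`, then `Φ` ends above `I`
once every coordinate has moved, so some single step moves `Φ` from at most `sup I` to above it.
Once the other coordinates are fixed, the values of that step's coordinate where this happens lie
in a closed interval of length `δ`, because `Φ` is monotone. Fubini then gives the bound
`J · s(ρ, δ) · ρ(ℝ)^(J-1)`. The concentration function is right-continuous, which lets `δ`
decrease to `|I|`. Right-continuity follows from a compactness argument, using the tightness
of `ρ` and continuity of `ρ` from above on closed intervals.
-/

open MeasureTheory Filter Topology Set

open scoped ENNReal

lemma exists_lt_and_map_le_lt_map_succ {α : Type*} [LinearOrder α] {f : ℕ → α} {b : α}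
    {n : ℕ} (h0 : f 0 ≤ b) (hn : b < f n) : ∃ k < n, f k ≤ b ∧ b < f (k + 1) := by
  induction n with
  | zero => exact absurd hn h0.not_gt
  | succ n ih =>
    by_cases h : f n ≤ b
    · exact ⟨n, lt_add_one n, h, hn⟩
    · obtain ⟨k, hk, hk'⟩ := ih (not_le.1 h)
      exact ⟨k, by omega, hk'⟩

/-- Lévy's concentration function, `s(ρ, ε)` in the statement. -/
noncomputable def levyConcentration (ρ : Measure ℝ) (ε : ℝ) : ℝ≥0∞ :=
  ⨆ c : ℝ, ρ (Icc c (c + ε))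

section Concentration

variable (ρ : Measure ℝ)

lemma measure_Icc_le_levyConcentration (c ε : ℝ) :
    ρ (Icc c (c + ε)) ≤ levyConcentration ρ ε :=
  le_iSup (fun c => ρ (Icc c (c + ε))) c

lemma levyConcentration_mono : Monotone (levyConcentration ρ) := fun _ _ h =>
  iSup_mono fun _ => measure_mono (Icc_subset_Icc_right (by linarith))

variable [IsFiniteMeasure ρ]

lemma tendsto_measure_compl_Icc_neg_atTop :
    Tendsto (fun K : ℝ => ρ (Icc (-K) K)ᶜ) atTop (𝓝 0) := by
  have hempty : ⋂ K : ℝ, (Icc (-K) K)ᶜ = ∅ := by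
    refine eq_empty_iff_forall_notMem.2 fun x hx => ?_
    exact mem_iInter.1 hx |x| ⟨neg_abs_le x, le_abs_self x⟩
  have h := tendsto_measure_iInter_atTop (μ := ρ)
    (fun K => measurableSet_Icc.compl.nullMeasurableSet)
    (fun K L hKL => compl_subset_compl.2 (Icc_subset_Icc (neg_le_neg hKL) hKL))
    ⟨0, measure_ne_top ρ _⟩
  rwa [hempty, measure_empty] at h

lemma le_measure_Icc_of_forall_pos {c ε : ℝ} {t : ℝ≥0∞}
    (h : ∀ γ > 0, t ≤ ρ (Icc (c - γ) (c + ε + γ))) : t ≤ ρ (Icc c (c + ε)) := by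
  have hinter : ⋂ γ > (0 : ℝ), Icc (c - γ) (c + ε + γ) = Icc c (c + ε) := by
    ext x
    simp only [mem_iInter, mem_Icc]
    refine ⟨fun hx => ⟨?_, ?_⟩, 
      fun hx γ hγ => ⟨by linarith [hx.1], by linarith [hx.2]⟩⟩
    · exact le_of_forall_pos_le_add fun γ hγ => by linarith [(hx γ hγ).1]
    · exact le_of_forall_pos_le_add fun γ hγ => (hx γ hγ).2
  have hlim := tendsto_measure_biInter_gt (μ := ρ) (a := (0 : ℝ))
    (s := fun γ => Icc (c - γ) (c + ε + γ)) (fun _ _ => measurableSet_Icc.nullMeasurableSet)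
    (fun _ _ _ hij => Icc_subset_Icc (by linarith) (by linarith))
    ⟨1, one_pos, measure_ne_top ρ _⟩
  rw [hinter] at hlim
  exact ge_of_tendsto hlim (eventually_nhdsWithin_of_forall h)

lemma exists_le_measure_Icc_of_forall_gt {ε : ℝ} {t : ℝ≥0∞}
    (h : ∀ δ > ε, ∃ c, t < ρ (Icc c (c + δ))) : ∃ c, t ≤ ρ (Icc c (c + ε)) := by
  rcases eq_or_ne t 0 with rfl | ht
  · exact ⟨0, by simp⟩
  choose! c hc using h
  obtain ⟨K, hK⟩ : ∃ K : ℝ, ρ (Icc (-K) K)ᶜ < t :=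
    ((tendsto_measure_compl_Icc_neg_atTop ρ).eventually_lt_const ht.bot_lt).exists
  -- an interval of measure `> t` must meet `[-K, K]`
  have hbound : ∀ δ > ε, δ < ε + 1 → c δ ∈ Icc (-K - (ε + 1)) K := by
    intro δ hδ hδ'
    obtain ⟨x, hx, hxK⟩ : (Icc (c δ) (c δ + δ) ∩ Icc (-K) K).Nonempty := by
      by_contra hdisj
      exact (hK.trans (hc δ hδ)).not_ge (measure_mono fun x hx hxK => hdisj ⟨x, hx, hxK⟩)
    exact ⟨by linarith [hx.2, hxK.1], hx.1.trans hxK.2⟩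
  have hfreq : ∃ᶠ δ in 𝓝[>] ε, c δ ∈ Icc (-K - (ε + 1)) K := by
    refine Eventually.frequently ?_
    filter_upwards [Ioo_mem_nhdsGT (lt_add_one ε)] with δ hδ using hbound δ hδ.1 hδ.2
  obtain ⟨x, -, hx⟩ := isCompact_Icc.exists_mapClusterPt_of_frequently hfreq
  refine ⟨x, le_measure_Icc_of_forall_pos ρ fun γ hγ => ?_⟩
  obtain ⟨δ, hcδ, hδ, hδγ⟩ :
      ∃ δ, c δ ∈ Ioo (x - γ / 2) (x + γ / 2) ∧ ε < δ ∧ δ < ε + γ / 2 :=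
    ((hx.frequently (Ioo_mem_nhds (by linarith) (by linarith))).and_eventually
      (Ioo_mem_nhdsGT (by linarith))).exists.imp fun _ h => ⟨h.1, h.2⟩
  exact (hc δ hδ).le.trans (measure_mono (Icc_subset_Icc (by linarith [hcδ.1])
    (by linarith [hcδ.2])))

lemma exists_gt_levyConcentration_lt {ε : ℝ} {t : ℝ≥0∞}
    (ht : levyConcentration ρ ε < t) :
    ∃ δ > ε, levyConcentration ρ δ < t := by
  by_contra! h
  obtain ⟨t', hεt', ht't⟩ := exists_between ht
  obtain ⟨c, hc⟩ := exists_le_measure_Icc_of_forall_gt ρ fun δ hδ =>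
    lt_iSup_iff.1 (ht't.trans_le (h δ hδ))
  exact (hc.trans (measure_Icc_le_levyConcentration ρ c ε)).not_gt hεt'

lemma tendsto_levyConcentration_nhdsGT (ε : ℝ) :
    Tendsto (levyConcentration ρ) (𝓝[>] ε) (𝓝 (levyConcentration ρ ε)) := by
  refine tendsto_order.2 ⟨fun s hs => ?_, fun t ht => ?_⟩
  · filter_upwards [self_mem_nhdsWithin] with δ hδ
    exact hs.trans_le (levyConcentration_mono ρ (le_of_lt hδ))
  · obtain ⟨δ, hεδ, hδ⟩ := exists_gt_levyConcentration_lt ρ ht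
    filter_upwards [Ioo_mem_nhdsGT hεδ] with δ' hδ'
    exact (levyConcentration_mono ρ hδ'.2.le).trans_lt hδ

end Concentration

lemma measure_le_lt_add_le_levyConcentration (ρ : Measure ℝ) {h : ℝ → ℝ} (hh : Monotone h)
    (b δ : ℝ) : ρ {x | h x ≤ b ∧ b < h (x + δ)} ≤ levyConcentration ρ δ := by
  set S := {x | h x ≤ b ∧ b < h (x + δ)}
  rcases S.eq_empty_or_nonempty with hS | ⟨x₀, hx₀⟩
  · simp [hS]
  set L := {x | h x ≤ b}
  have hub : ∀ x ∈ S, x + δ ∈ upperBounds L := fun x hx y hy =>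
    le_of_not_gt fun hlt => (hx.2.trans_le (hh hlt.le)).not_ge hy
  have hsub : S ⊆ Icc (sSup L - δ) (sSup L - δ + δ) := fun x hx =>
    ⟨by linarith [csSup_le ⟨x₀, hx₀.1⟩ (hub x hx)],
      by simpa using le_csSup ⟨_, hub x₀ hx₀⟩ hx.1⟩
  exact (measure_mono hsub).trans (measure_Icc_le_levyConcentration ρ _ δ)

lemma measure_pi_le_of_forall_insertNth {α : Type*} [MeasurableSpace α] (ρ : Measure α)
    [SigmaFinite ρ] {n : ℕ} (i : Fin (n + 1)) {S : Set (Fin (n + 1) → α)}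
    (hS : MeasurableSet S)
    {C : ℝ≥0∞} (hC : ∀ y : Fin n → α, ρ {x | Fin.insertNth i x y ∈ S} ≤ C) :
    Measure.pi (fun _ => ρ) S ≤ C * ρ univ ^ n := by
  set e := MeasurableEquiv.piFinSuccAbove (fun _ : Fin (n + 1) => α) i
  have hmp := (measurePreserving_piFinSuccAbove (fun _ : Fin (n + 1) => ρ) i).symm e
  rw [← hmp.measure_preimage hS.nullMeasurableSet,
    Measure.prod_apply_symm (e.symm.measurable hS)]
  calc ∫⁻ y, ρ ((fun x => (x, y)) ⁻¹' (e.symm ⁻¹' S)) ∂Measure.pi (fun _ : Fin n => ρ)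
      ≤ ∫⁻ _, C ∂Measure.pi (fun _ : Fin n => ρ) := lintegral_mono hC
    _ = C * ρ univ ^ n := by simp [Measure.pi_univ]

section Shifts

variable (ρ : Measure ℝ) [SigmaFinite ρ]

lemma measure_le_lt_update_add_le {n : ℕ} {ψ : (Fin (n + 1) → ℝ) → ℝ} (hψ : Monotone ψ)
    (hψm : Measurable ψ) (i : Fin (n + 1)) (b δ : ℝ) :
    Measure.pi (fun _ => ρ) {q | ψ q ≤ b ∧ b < ψ (Function.update q i (q i + δ))}
      ≤ levyConcentration ρ δ * ρ univ ^ n := by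
  refine measure_pi_le_of_forall_insertNth ρ i ?_ fun y => ?_
  · have hshifted : Measurable fun q => ψ (Function.update q i (q i + δ)) := by fun_prop
    exact (measurableSet_le hψm measurable_const).inter
      (measurableSet_lt measurable_const hshifted)
  · simp only [mem_ofPred_eq, Fin.update_insertNth, Fin.insertNth_apply_same]
    exact measure_le_lt_add_le_levyConcentration ρ
      (hψ.comp fun x x' hxx' => Fin.insertNth_le_iff.2 ⟨by simpa using hxx', by simp⟩) b δ

lemma measure_le_lt_add_const_le {J : ℕ} {Φ : (Fin J → ℝ) → ℝ} (hΦ : Monotone Φ)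
    (hΦm : Measurable Φ) (b δ : ℝ) :
    Measure.pi (fun _ : Fin J => ρ) {q | Φ q ≤ b ∧ b < Φ (fun i => q i + δ)}
      ≤ J * levyConcentration ρ δ * ρ univ ^ (J - 1) := by
  set v : ℕ → Fin J → ℝ := fun k i => if (i : ℕ) < k then δ else 0
  have hv : ∀ (i : Fin J) (q : Fin J → ℝ),
      Function.update q i (q i + δ) + v i = q + v (i + 1) := by
    intro i q
    funext j
    rcases eq_or_ne j i with rfl | hji
    · simp [v]
    · have : (j : ℕ) ≠ i := Fin.val_ne_of_ne hji
      simp only [Pi.add_apply, Function.update_of_ne hji, v]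
      split_ifs <;> first | rfl | omega
  set T : ℕ → Set (Fin J → ℝ) :=
    fun k => {q | Φ (q + v k) ≤ b ∧ b < Φ (q + v (k + 1))}
  have hcover :
      {q | Φ q ≤ b ∧ b < Φ (fun i => q i + δ)} ⊆ ⋃ k ∈ Finset.range J, T k := by
    intro q hq
    obtain ⟨k, hk, hkT⟩ :=
      exists_lt_and_map_le_lt_map_succ (f := fun k => Φ (q + v k)) (n := J)
      (by simpa [v, Pi.add_def] using hq.1) (by simpa [v, Pi.add_def] using hq.2)
    exact mem_biUnion (Finset.mem_range.2 hk) hkT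
  have hstep : ∀ k < J,
      Measure.pi (fun _ => ρ) (T k) ≤ levyConcentration ρ δ * ρ univ ^ (J - 1) := by
    intro k hk
    obtain ⟨n, rfl⟩ : ∃ n, J = n + 1 := ⟨J - 1, by omega⟩
    have := measure_le_lt_update_add_le ρ (ψ := fun q => Φ (q + v k))
      (hΦ.comp fun _ _ h => add_le_add_left h _) (hΦm.comp (measurable_id.add_const _))
      ⟨k, hk⟩ b δ
    simpa [T, hv] using this
  calc Measure.pi (fun _ => ρ) {q | Φ q ≤ b ∧ b < Φ (fun i => q i + δ)}
      ≤ ∑ k ∈ Finset.range J, Measure.pi (fun _ => ρ) (T k) :=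
        (measure_mono hcover).trans (measure_biUnion_finset_le _ _)
    _ ≤ ∑ _k ∈ Finset.range J, levyConcentration ρ δ * ρ univ ^ (J - 1) :=
        Finset.sum_le_sum fun k hk => hstep k (Finset.mem_range.1 hk)
    _ = J * levyConcentration ρ δ * ρ univ ^ (J - 1) := by
        rw [Finset.sum_const, Finset.card_range, nsmul_eq_mul, mul_assoc]

end Shifts

theorem stmt_7_general (ρ : Measure ℝ) [IsFiniteMeasure ρ] (J : ℕ)
    (Φ : (Fin J → ℝ) → ℝ) (hcont : Continuous Φ)
    (hmono : ∀ q q' : Fin J → ℝ, (∀ i, q i ≤ q' i) → Φ q ≤ Φ q')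
    (hshift : ∀ (q : Fin J → ℝ) (t : ℝ), 0 ≤ t → t ≤ Φ (fun i => q i + t) - Φ q)
    (a b : ℝ) :
    (Measure.pi fun _ : Fin J => ρ) {q | Φ q ∈ Set.Icc a b}
      ≤ (J : ENNReal) * (⨆ c : ℝ, ρ (Set.Icc c (c + (b - a)))) * (ρ Set.univ) ^ (J - 1) := by
  have hbound : ∀ δ > b - a, (Measure.pi fun _ : Fin J => ρ) {q | Φ q ∈ Icc a b}
      ≤ J * levyConcentration ρ δ * ρ univ ^ (J - 1) := by
    intro δ hδ
    have hsub : {q | Φ q ∈ Icc a b} ⊆ {q | Φ q ≤ b ∧ b < Φ (fun i => q i + δ)} :=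
      fun q hq =>
      ⟨hq.2, by linarith [hq.1, hshift q δ (by linarith [hq.1, hq.2])]⟩
    exact (measure_mono hsub).trans
      (measure_le_lt_add_const_le ρ (fun q q' => hmono q q') hcont.measurable b δ)
  have hlim : Tendsto (fun δ => (J : ℝ≥0∞) * levyConcentration ρ δ * ρ univ ^ (J - 1))
      (𝓝[>] (b - a)) (𝓝 (J * levyConcentration ρ (b - a) * ρ univ ^ (J - 1))) :=
    ENNReal.Tendsto.mul_const
      (ENNReal.Tendsto.const_mul (tendsto_levyConcentration_nhdsGT ρ _)
        (Or.inr (ENNReal.natCast_ne_top J)))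
      (Or.inr (ENNReal.pow_ne_top (measure_ne_top ρ _)))
  exact ge_of_tendsto hlim (eventually_nhdsWithin_of_forall hbound)

/-- Stollmann's lemma: let `ρ` be a finite measure on `ℝ` and `Φ : ℝ^J → ℝ` continuous,
monotone in each variable, with `Φ(q + t·e) - Φ(q) ≥ t` for `t ≥ 0` (`e = (1,…,1)`).
With `s(ρ,ε) = sup_a ρ([a,a+ε])`, for any bounded interval `I = [a,b]` the product
measure satisfies `(⊗^J ρ){q : Φ(q) ∈ I} ≤ J · s(ρ,|I|) · ρ(ℝ)^(J-1)`. -/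
theorem stmt_7 (ρ : Measure ℝ) [IsFiniteMeasure ρ] (J : ℕ)
    (Φ : (Fin J → ℝ) → ℝ) (hcont : Continuous Φ)
    (hmono : ∀ q q' : Fin J → ℝ, (∀ i, q i ≤ q' i) → Φ q ≤ Φ q')
    (hshift : ∀ (q : Fin J → ℝ) (t : ℝ), 0 ≤ t → t ≤ Φ (fun i => q i + t) - Φ q)
    (a b : ℝ) (hab : a ≤ b) :
    (Measure.pi fun _ : Fin J => ρ) {q | Φ q ∈ Set.Icc a b}
      ≤ (J : ENNReal) * (⨆ c : ℝ, ρ (Set.Icc c (c + (b - a)))) * (ρ Set.univ) ^ (J - 1) :=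
  stmt_7_general ρ J Φ hcont hmono hshift a b
end

section
/- Let H be a self-adjoint operator on a finite-dimensional space ℓ²(Λ), Λ finite, and for j in a subset A⊂Λ let δ_j denote the rank-one projection onto the j-th coordinate. Let ψ be a normalized eigenvector of H_q := H + Σ_{j∈Λ} q_j δ_j with eigenvalue E_n(q)∈I, where I is an interval with dist(I, (a,b)^c) ≥ δ > 0. Suppose the operator H + V^sing (obtained by replacing q_j, j∈A, by a fixed value q_c=b+s₊+1) has no spectrum in (a,b), and q_j ∈ (a+s₋, b+s₊) for all j∈A. Then Σ_{j∈A} ⟨ψ, δ_j ψ⟩ ≥ (δ/(b−a+s₊−s₋+1))². -/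
/-!
The residual `v := (H + V^sing - E) ψ` is controlled from both sides. Since `H + V^sing` is
symmetric and none of its eigenvalues lies in `(a, b)`, each of them is at distance at least `δ`
from `E ∈ I`, and expanding `ψ` in an orthonormal eigenbasis gives `δ ≤ ‖v‖`. On the other hand
`H + V^sing` differs from `H_q` only by the diagonal entries `q_c - q_j`, `j ∈ A`, which lie in
`[0, b - a + s₊ - s₋ + 1]`, and `H_q ψ = E ψ`; hence `‖v‖² ≤ (b - a + s₊ - s₋ + 1)² Σ_{j∈A} ψ_j²`.
-/

open Matrix

open Module.End in
theorem LinearMap.IsSymmetric.mul_norm_le_norm_sub_smul {𝕜 E : Type*} [RCLike 𝕜]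
    [NormedAddCommGroup E] [InnerProductSpace 𝕜 E] [FiniteDimensional 𝕜 E]
    {T : E →ₗ[𝕜] E} (hT : T.IsSymmetric) {c δ : ℝ} (hδ : 0 ≤ δ)
    (hgap : ∀ μ : ℝ, HasEigenvalue T μ → δ ≤ |μ - c|) (x : E) :
    δ * ‖x‖ ≤ ‖T x - (c : 𝕜) • x‖ := by
  set b := hT.eigenvectorBasis rfl
  have hcoord : ∀ i, δ * ‖b.repr x i‖ ≤ ‖b.repr (T x - (c : 𝕜) • x) i‖ := by
    intro i
    rw [map_sub, map_smul, PiLp.sub_apply, PiLp.smul_apply, hT.eigenvectorBasis_apply_self_apply,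
      smul_eq_mul, ← sub_mul, norm_mul, ← RCLike.ofReal_sub, RCLike.norm_ofReal]
    exact mul_le_mul_of_nonneg_right (hgap _ (hT.hasEigenvalue_eigenvalues rfl i)) (norm_nonneg _)
  rw [← b.repr.norm_map x, ← b.repr.norm_map, ← pow_le_pow_iff_left₀ (by positivity)
    (norm_nonneg _) two_ne_zero, mul_pow, EuclideanSpace.norm_sq_eq, EuclideanSpace.norm_sq_eq,
    Finset.mul_sum]
  gcongr with i
  rw [← mul_pow]
  exact pow_le_pow_left₀ (by positivity) (hcoord i) 2

theorem Matrix.IsSymm.sq_mul_sum_sq_le_sum_sq_mulVec_sub_smul {n : Type*} [Fintype n]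
    [DecidableEq n] {K : Matrix n n ℝ} (hK : K.IsSymm) {c δ : ℝ} (hδ : 0 ≤ δ)
    (hgap : ∀ (μ : ℝ) (φ : n → ℝ), φ ≠ 0 → K *ᵥ φ = μ • φ → δ ≤ |μ - c|) (x : n → ℝ) :
    δ ^ 2 * ∑ i, x i ^ 2 ≤ ∑ i, (K *ᵥ x - c • x) i ^ 2 := by
  have hT : K.toEuclideanLin.IsSymmetric :=
    isSymmetric_toEuclideanLin_iff.mpr (isHermitian_iff_isSymm.mpr hK)
  have hgap' : ∀ μ : ℝ, Module.End.HasEigenvalue K.toEuclideanLin μ → δ ≤ |μ - c| := by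
    intro μ hμ
    obtain ⟨v, hv, hv0⟩ := hμ.exists_hasEigenvector
    refine hgap μ v.ofLp (by simpa using hv0) ?_
    simpa [toLpLin_apply] using congrArg WithLp.ofLp (Module.End.mem_eigenspace_iff.mp hv)
  have h := pow_le_pow_left₀ (by positivity) (hT.mul_norm_le_norm_sub_smul hδ hgap' (.toLp 2 x)) 2
  rw [mul_pow, EuclideanSpace.real_norm_sq_eq, EuclideanSpace.real_norm_sq_eq] at h
  exact h

theorem Finset.sum_sq_mul_le_sq_mul_sum_sq {n : Type*} [Fintype n] (A : Finset n)
    {w ψ : n → ℝ} {C : ℝ} (hw : ∀ j ∉ A, w j = 0) (hwC : ∀ j ∈ A, |w j| ≤ C) :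
    ∑ j, (w j * ψ j) ^ 2 ≤ C ^ 2 * ∑ j ∈ A, ψ j ^ 2 := by
  rw [← Finset.sum_subset A.subset_univ fun j _ hj => by simp [hw j hj], Finset.mul_sum]
  refine Finset.sum_le_sum fun j hj => ?_
  rw [mul_pow]
  exact mul_le_mul_of_nonneg_right (sq_le_sq.mpr ((hwC j hj).trans (le_abs_self C))) (sq_nonneg _)

theorem stmt_10_general (D : ℕ) (H : Matrix (Fin D) (Fin D) ℝ) (hH : H.IsSymm)
    (sm sp a b δ : ℝ) (hδ : 0 < δ)
    (A : Finset (Fin D)) (q : Fin D → ℝ)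
    (hq : ∀ j ∈ A, q j ∈ Set.Ioo (a + sm) (b + sp))
    (I : Set ℝ) (hI : ∀ x ∈ I, ∀ y ∉ Set.Ioo a b, δ ≤ |x - y|)
    (E : ℝ) (hE : E ∈ I)
    (ψ : Fin D → ℝ) (hψ : ∑ j, ψ j ^ 2 = 1)
    (heig : (H + Matrix.diagonal q).mulVec ψ = E • ψ)
    (hsing : ∀ (μ : ℝ) (φ : Fin D → ℝ), φ ≠ 0 →
      (H + Matrix.diagonal fun j => if j ∈ A then b + sp + 1 else q j).mulVec φ = μ • φ →
      μ ∉ Set.Ioo a b) :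
    (δ / (b - a + sp - sm + 1)) ^ 2 ≤ ∑ j ∈ A, ψ j ^ 2 := by
  set q' : Fin D → ℝ := fun j => if j ∈ A then b + sp + 1 else q j
  have hgap : ∀ (μ : ℝ) (φ : Fin D → ℝ), φ ≠ 0 → (H + diagonal q') *ᵥ φ = μ • φ →
      δ ≤ |μ - E| := fun μ φ hφ hμ => abs_sub_comm E μ ▸ hI E hE μ (hsing μ φ hφ hμ)
  have hresidual : (H + diagonal q') *ᵥ ψ - E • ψ = fun j => (q' j - q j) * ψ j := by
    rw [← heig, ← sub_mulVec, add_sub_add_left_eq_sub, diagonal_sub]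
    exact funext (mulVec_diagonal _ ψ)
  have hlower := (hH.add (isSymm_diagonal q')).sq_mul_sum_sq_le_sum_sq_mulVec_sub_smul hδ.le hgap ψ
  rw [hψ, mul_one, hresidual] at hlower
  have hupper : ∑ j, ((q' j - q j) * ψ j) ^ 2 ≤ (b - a + sp - sm + 1) ^ 2 * ∑ j ∈ A, ψ j ^ 2 :=
    A.sum_sq_mul_le_sq_mul_sum_sq (fun j hj => by simp [q', hj]) fun j hj => by
      obtain ⟨hlo, hhi⟩ := hq j hj
      simp only [q', if_pos hj]
      exact abs_le.mpr ⟨by linarith, by linarith⟩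
  rw [div_pow]
  exact div_le_of_le_mul₀ (sq_nonneg _) (Finset.sum_nonneg fun j _ => sq_nonneg _)
    (by linarith [hlower.trans hupper])

/-- Eigenvector mass lower bound: let `H` be symmetric on `ℓ²(Λ)`, `Λ = Fin D`, with
spectrum in `[sm,sp]`, let `ψ` be a normalized eigenvector of `H_q = H + diag(q)` with
eigenvalue `E ∈ I`, where `dist(I,(a,b)ᶜ) ≥ δ > 0`, suppose `q_j ∈ (a+sm, b+sp)` for
`j ∈ A`, and suppose the operator obtained by replacing `q_j` (`j ∈ A`) by
`q_c = b+sp+1` has no spectrum in `(a,b)`.  Then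
`Σ_{j∈A} ⟨ψ, δ_j ψ⟩ ≥ (δ/(b-a+sp-sm+1))²`. -/
theorem stmt_10 (D : ℕ) (H : Matrix (Fin D) (Fin D) ℝ) (hH : H.IsSymm)
    (sm sp a b δ : ℝ) (hδ : 0 < δ)
    (hspecH : ∀ (μ : ℝ) (φ : Fin D → ℝ), φ ≠ 0 → H.mulVec φ = μ • φ → μ ∈ Set.Icc sm sp)
    (A : Finset (Fin D)) (q : Fin D → ℝ)
    (hq : ∀ j ∈ A, q j ∈ Set.Ioo (a + sm) (b + sp))
    (I : Set ℝ) (hI : ∀ x ∈ I, ∀ y ∉ Set.Ioo a b, δ ≤ |x - y|)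
    (E : ℝ) (hE : E ∈ I)
    (ψ : Fin D → ℝ) (hψ : ∑ j, ψ j ^ 2 = 1)
    (heig : (H + Matrix.diagonal q).mulVec ψ = E • ψ)
    (hsing : ∀ (μ : ℝ) (φ : Fin D → ℝ), φ ≠ 0 →
      (H + Matrix.diagonal fun j => if j ∈ A then b + sp + 1 else q j).mulVec φ = μ • φ →
      μ ∉ Set.Ioo a b) :
    (δ / (b - a + sp - sm + 1)) ^ 2 ≤ ∑ j ∈ A, ψ j ^ 2 :=
  stmt_10_general D H hH sm sp a b δ hδ A q hq I hI E hE ψ hψ heig hsing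
end

section
/- Let H be a self-adjoint operator on ℓ²(X), X countable, with finite hopping range R (i.e. ⟨δ_k, Hδ_j⟩=0 when dist(k,j)≥R). Suppose the unique continuation property holds at energy E: any eigenfunction f with Hf=Ef that vanishes on the outer 2R-boundary ∂^o_{2R}Λ of a finite set Λ also vanishes on Λ. Then for every finite Λ⊂X, dim ran(χ_Λ P_E) ≤ |∂^o_{2R}Λ|, where P_E is the spectral projection onto ker(H−E). -/
/-- `delta X k` is the standard basis vector `δ_k` of `ℓ²(X)`. -/
noncomputable def delta (X : Type*) [DecidableEq X] (k : X) : lp (fun _ : X => ℂ) 2 :=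
  lp.single 2 k 1

/-- `resMap X Λ` is the coordinate restriction `χ_Λ : ℓ²(X) → ℂ^Λ`, `g ↦ g↾Λ`. -/
noncomputable def resMap (X : Type*) (Λ : Finset X) :
    lp (fun _ : X => ℂ) 2 →ₗ[ℂ] (Λ → ℂ) where
  toFun g := fun k => g k.1
  map_add' g h := by funext k; simp
  map_smul' c g := by funext k; simp

/- The eigenspace is mapped into `ℂ^Λ` by restriction to `Λ`, and into `ℂ^{∂Λ}` by restriction to
the outer `2R`-boundary. Unique continuation says the second map has the smaller kernel, so the
first factors through it and its image is at most `|∂Λ|`-dimensional. -/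

section RankOfKerLe

universe u

variable {R : Type*} {M N P : Type u} [Ring R]
  [AddCommGroup M] [Module R M] [AddCommGroup N] [Module R N] [AddCommGroup P] [Module R P]

theorem LinearMap.rank_range_le_of_ker_le (A : M →ₗ[R] N) (B : M →ₗ[R] P) (h : ker B ≤ ker A) :
    Module.rank R (range A) ≤ Module.rank R (range B) :=
  calc Module.rank R (range A)
      = Module.rank R (range ((ker B).liftQ A h)) := by rw [Submodule.range_liftQ]
    _ ≤ Module.rank R (M ⧸ ker B) := rank_range_le _
    _ = Module.rank R (range B) := B.quotKerEquivRange.rank_eq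

theorem Submodule.rank_map_le_of_ker_le (K : Submodule R M) (A : M →ₗ[R] N) (B : M →ₗ[R] P)
    (h : ∀ x ∈ K, B x = 0 → A x = 0) :
    Module.rank R (K.map A) ≤ Module.rank R (K.map B) := by
  rw [← K.range_subtype, ← LinearMap.range_comp, ← LinearMap.range_comp]
  exact LinearMap.rank_range_le_of_ker_le (A ∘ₗ K.subtype) (B ∘ₗ K.subtype) fun x hx => h x x.2 hx

end RankOfKerLe

theorem stmt_17_general (X : Type*) (d : X → X → ℕ)
    (H : lp (fun _ : X => ℂ) 2 →L[ℂ] lp (fun _ : X => ℂ) 2)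
    (R : ℕ)
    (E : ℝ)
    (hucp : ∀ (Λ : Finset X) (f : lp (fun _ : X => ℂ) 2), H f = (E : ℂ) • f →
      (∀ k, k ∉ Λ → (∃ j ∈ Λ, d k j ≤ 2 * R) → f k = 0) → ∀ k ∈ Λ, f k = 0)
    (Λ bd : Finset X)
    (hbd : ∀ k, k ∈ bd ↔ k ∉ Λ ∧ ∃ j ∈ Λ, d k j ≤ 2 * R) :
    Module.rank ℂ
        (Submodule.map (resMap X Λ)
          (LinearMap.ker ((H : lp (fun _ : X => ℂ) 2 →ₗ[ℂ] lp (fun _ : X => ℂ) 2)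
            - (E : ℂ) • LinearMap.id)))
      ≤ (bd.card : Cardinal) := by
  calc _ ≤ Module.rank ℂ (Submodule.map (resMap X bd) _) := by
        refine Submodule.rank_map_le_of_ker_le _ _ _ fun f hf hf_bd => funext fun k => ?_
        have heig : H f = (E : ℂ) • f := sub_eq_zero.mp hf
        exact hucp Λ f heig (fun k hk hkΛ => congrFun hf_bd ⟨k, (hbd k).2 ⟨hk, hkΛ⟩⟩) k k.2
    _ ≤ Module.rank ℂ (bd → ℂ) := Submodule.rank_le _
    _ = bd.card := by simp

/-- Unique continuation implies a rank bound: let `H` be self-adjoint on `ℓ²(X)` with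
finite hopping range `R` for a distance function `d` (matrix elements vanish when
`d(k,j) ≥ R`).  If every eigenfunction `f` with `H f = E f` vanishing on the outer
`2R`-boundary of a finite set vanishes on the set itself, then for every finite
`Λ ⊆ X` the rank of `χ_Λ P_E` (the image under `χ_Λ` of the eigenspace `ker(H-E)`)
is at most `|∂^o_{2R} Λ|`. -/
theorem stmt_17 (X : Type*) [DecidableEq X] [Countable X] (d : X → X → ℕ)
    (H : lp (fun _ : X => ℂ) 2 →L[ℂ] lp (fun _ : X => ℂ) 2) (hsa : IsSelfAdjoint H)
    (R : ℕ)
    (hrange : ∀ k j, R ≤ d k j → (inner ℂ (delta X k) (H (delta X j)) : ℂ) = 0)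
    (E : ℝ)
    (hucp : ∀ (Λ : Finset X) (f : lp (fun _ : X => ℂ) 2), H f = (E : ℂ) • f →
      (∀ k, k ∉ Λ → (∃ j ∈ Λ, d k j ≤ 2 * R) → f k = 0) → ∀ k ∈ Λ, f k = 0)
    (Λ bd : Finset X)
    (hbd : ∀ k, k ∈ bd ↔ k ∉ Λ ∧ ∃ j ∈ Λ, d k j ≤ 2 * R) :
    Module.rank ℂ
        (Submodule.map (resMap X Λ)
          (LinearMap.ker ((H : lp (fun _ : X => ℂ) 2 →ₗ[ℂ] lp (fun _ : X => ℂ) 2)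
            - (E : ℂ) • LinearMap.id)))
      ≤ (bd.card : Cardinal) :=
  stmt_17_general X d H R E hucp Λ bd hbd
end
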